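/- Let R be a field, G a group, J a subgroup of G, and λ a simple R[J]-module. Assume: (a') the intertwining set of λ in G equals J, i.e. for every g ∈ G with g ∉ J one has Hom_{R[J ∩ gJg⁻¹]}(ᵍλ, λ|_{J ∩ gJg⁻¹}) = 0; and (b') for every R[G]-quotient module π of ind_J^G λ, if λ is isomorphic to an R[J]-submodule of π|_J, then λ is isomorphic to a quotient of π|_J. Then ind_J^G λ is a simple R[G]-module. -/

import Mathlib

/-!
Let `N` be a proper `G`-stable subspace of `ind λ`. As `ind λ` is generated over `G` by the
vectors `1 ⊗ v`, the `J`-map `λ → ind λ / N`, `v ↦ 1 ⊗ v`, is nonzero, hence injective since `λ`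
is simple, and (b') provides a `J`-surjection `Φ : ind λ → λ` vanishing on `N`. For `g ∉ J` the
map `v ↦ Φ (g ⊗ v)` intertwines `ᵍλ` with `λ` on `J ∩ gJg⁻¹`, so it vanishes by (a'). Hence
`Φ f = c (f 1)` with `c = Φ (1 ⊗ -)`, a nonzero and therefore injective `J`-endomorphism of `λ`.
For `f ∈ N` and `x ∈ G` this gives `c (f x) = Φ (x⁻¹ • f) = 0`, so `f = 0`.
-/

open Function

variable {R : Type*} [Field R] {G : Type*} [Group G]
variable {V : Type*} [AddCommGroup V] [Module R V]

/-- The induced module `ind_J^G λ`, modelled as the space of functions `f : G → V`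
with `f (g * j) = σ j⁻¹ (f g)` supported on finitely many left cosets of `J`
(this is the usual model of `R[G] ⊗_{R[J]} V`, with `g ⊗ v` corresponding to the function
supported on `gJ` sending `g * j` to `σ j⁻¹ v`). -/
def indCarrier (J : Subgroup G) (σ : Representation R J V) : Submodule R (G → V) where
  carrier := {f | (∀ (g : G) (j : J), f (g * (j : G)) = σ j⁻¹ (f g)) ∧
      ((QuotientGroup.mk : G → G ⧸ J) '' Function.support f).Finite}
  add_mem' := by
    rintro f g ⟨hf1, hf2⟩ ⟨hg1, hg2⟩
    refine ⟨fun x j => by simp [hf1, hg1], ?_⟩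
    refine (hf2.union hg2).subset ?_
    rw [← Set.image_union]
    exact Set.image_mono (Function.support_add _ _)
  zero_mem' := ⟨fun g j => by simp, by simp⟩
  smul_mem' := by
    rintro c f ⟨hf1, hf2⟩
    refine ⟨fun g j => by simp [hf1], ?_⟩
    exact hf2.subset (Set.image_mono (Function.support_const_smul_subset c f))

/-- The representation of `G` on the induced module `ind_J^G λ`, by left translation:
`(x • f) (g) = f (x⁻¹ * g)`. -/
def indRep (J : Subgroup G) (σ : Representation R J V) :
    Representation R G (indCarrier J σ) where
  toFun x :=
    { toFun := fun f => ⟨fun g => (f : G → V) (x⁻¹ * g), by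
        refine ⟨fun g j => ?_, ?_⟩
        · show (f : G → V) (x⁻¹ * (g * (j : G))) = σ j⁻¹ ((f : G → V) (x⁻¹ * g))
          rw [← mul_assoc]
          exact f.2.1 _ j
        refine ((f.2.2).image (fun c : G ⧸ J => x • c)).subset ?_
        rintro c ⟨g, hg, rfl⟩
        refine ⟨QuotientGroup.mk (x⁻¹ * g), ⟨x⁻¹ * g, hg, rfl⟩, ?_⟩
        show x • (QuotientGroup.mk (x⁻¹ * g) : G ⧸ J) = QuotientGroup.mk g
        rw [MulAction.Quotient.smul_mk, smul_eq_mul, mul_inv_cancel_left]⟩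
      map_add' := fun f g => Subtype.ext (funext fun g' => rfl)
      map_smul' := fun c f => Subtype.ext (funext fun g' => rfl) }
  map_one' := by
    apply LinearMap.ext; intro f
    exact Subtype.ext (funext fun g => by simp)
  map_mul' := fun x y => by
    apply LinearMap.ext; intro f
    exact Subtype.ext (funext fun g => by simp [mul_assoc])


instance (J : Subgroup G) (σ : Representation R J V) :
    AddCommGroup (indRep J σ).asModule := inferInstanceAs (AddCommGroup (indCarrier J σ))

instance {H : Type*} [Group H] (σ : Representation R H V) :
    AddCommGroup σ.asModule := inferInstanceAs (AddCommGroup V)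

/-- The quotient representation on `M ⧸ N`, for `N` a `G`-invariant submodule of `M`. -/
def quotRep {M : Type*} [AddCommGroup M] [Module R M] (ρ : Representation R G M)
    (N : Submodule R M) (hN : ∀ (x : G) (m : M), m ∈ N → ρ x m ∈ N) :
    Representation R G (M ⧸ N) where
  toFun x := Submodule.mapQ N N (ρ x) (fun m hm => hN x m hm)
  map_one' := by
    apply LinearMap.ext
    intro q
    obtain ⟨m, rfl⟩ := Submodule.Quotient.mk_surjective N q
    simp [Submodule.mapQ_apply]
  map_mul' x y := by
    apply LinearMap.ext
    intro q
    obtain ⟨m, rfl⟩ := Submodule.Quotient.mk_surjective N q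
    simp [Submodule.mapQ_apply]

open Function Representation

theorem Representation.IsIrreducible.injective_of_isIntertwining {H M W : Type*} [Monoid H]
    [AddCommGroup M] [Module R M] [AddCommGroup W] [Module R W] {ρ : Representation R H M}
    [IsIrreducible ρ] (τ : Representation R H W) {f : M →ₗ[R] W}
    (hf : ∀ h m, f (ρ h m) = τ h (f m)) (hf0 : f ≠ 0) : Injective f :=
  (injective_or_eq_zero (f.intertwiningMap_of_isIntertwiningMap ρ τ hf)).resolve_right
    fun h => hf0 congr(IntertwiningMap.toLinearMap $h)

theorem Representation.isIrreducible_of_forall_invariant {H M : Type*} [Monoid H]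
    [AddCommGroup M] [Module R M] [Nontrivial M] {ρ : Representation R H M}
    (h : ∀ N : Submodule R M, (∀ (x : H) (m : M), m ∈ N → ρ x m ∈ N) → N ≠ ⊤ → N = ⊥) :
    IsIrreducible ρ where
  exists_pair_ne := ⟨⊥, ⊤, fun h => bot_ne_top congr(Subrepresentation.toSubmodule $h)⟩
  eq_bot_or_eq_top N := or_iff_not_imp_right.mpr fun hN =>
    Subrepresentation.toSubmodule_injective <|
      h N.toSubmodule (fun x _ hm => N.apply_mem_toSubmodule x hm)
        fun h' => hN (Subrepresentation.toSubmodule_injective h')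

section Induced

open scoped Classical

variable (J : Subgroup G) (σ : Representation R J V)

lemma indRep_apply (x : G) (f : indCarrier J σ) (g : G) :
    (indRep J σ x f : G → V) g = (f : G → V) (x⁻¹ * g) :=
  rfl

lemma indCarrier_apply_mul (f : indCarrier J σ) (g : G) (j : J) :
    (f : G → V) (g * j) = σ j⁻¹ ((f : G → V) g) :=
  f.2.1 g j

/-- The map `v ↦ 1 ⊗ v`. -/
noncomputable def indIncl : V →ₗ[R] indCarrier J σ where
  toFun v := ⟨fun g => if h : g ∈ J then σ ⟨g, h⟩⁻¹ v else 0, by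
    refine ⟨fun g j => ?_, (Set.finite_singleton ((1 : G) : G ⧸ J)).subset ?_⟩
    · dsimp only
      by_cases hg : g ∈ J
      · rw [dif_pos hg, dif_pos (J.mul_mem hg j.2), ← Module.End.mul_apply, ← map_mul]
        congr 2
        ext
        simp
      · rw [dif_neg hg, dif_neg fun h => hg (by simpa using J.mul_mem h (J.inv_mem j.2)),
          map_zero]
    · rintro _ ⟨g, hg, rfl⟩
      have hgJ : g ∈ J := by_contra fun h => hg (dif_neg h)
      exact QuotientGroup.eq.mpr (by simpa using hgJ)⟩
  map_add' v w := by
    ext g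
    by_cases h : g ∈ J <;> simp [h]
  map_smul' r v := by
    ext g
    by_cases h : g ∈ J <;> simp [h]

lemma indIncl_apply (v : V) (g : G) :
    (indIncl J σ v : G → V) g = if h : g ∈ J then σ ⟨g, h⟩⁻¹ v else 0 :=
  rfl

lemma indIncl_apply_one (v : V) : (indIncl J σ v : G → V) 1 = v := by
  rw [indIncl_apply, dif_pos J.one_mem]
  change σ 1⁻¹ v = v
  simp

lemma indIncl_injective : Injective (indIncl J σ) := fun v w h => by
  rw [← indIncl_apply_one J σ v, h, indIncl_apply_one]

lemma indRep_indIncl (j : J) (v : V) :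
    indRep J σ j (indIncl J σ v) = indIncl J σ (σ j v) := by
  ext g
  rw [indRep_apply, indIncl_apply, indIncl_apply]
  by_cases hg : g ∈ J
  · rw [dif_pos (J.mul_mem (J.inv_mem j.2) hg), dif_pos hg, ← Module.End.mul_apply, ← map_mul]
    congr 2
    ext
    simp
  · rw [dif_neg fun h => hg (by simpa using J.mul_mem j.2 h), dif_neg hg]

lemma indRep_out_indIncl_apply (f : indCarrier J σ) (c : G ⧸ J) (x : G) :
    (indRep J σ c.out (indIncl J σ ((f : G → V) c.out)) : G → V) x =
      if (x : G ⧸ J) = c then (f : G → V) x else 0 := by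
  rw [indRep_apply, indIncl_apply]
  by_cases hx : (x : G ⧸ J) = c
  · have hmem : c.out⁻¹ * x ∈ J := QuotientGroup.eq.mp (by rw [QuotientGroup.out_eq', hx])
    rw [if_pos hx, dif_pos hmem, ← indCarrier_apply_mul, mul_inv_cancel_left]
  · rw [if_neg hx, dif_neg fun hmem => hx ?_]
    rw [← QuotientGroup.out_eq' c]
    exact (QuotientGroup.eq.mpr hmem).symm

lemma sum_indRep_out_indIncl (f : indCarrier J σ) :
    ∑ c ∈ f.2.2.toFinset, indRep J σ c.out (indIncl J σ ((f : G → V) c.out)) = f := by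
  ext x
  simp only [AddSubmonoidClass.coe_finsetSum, Finset.sum_apply, indRep_out_indIncl_apply,
    Finset.sum_ite_eq]
  split_ifs with hx
  · rfl
  · by_contra hfx
    exact hx (f.2.2.mem_toFinset.mpr ⟨x, Ne.symm hfx, rfl⟩)

lemma span_range_indRep_indIncl :
    Submodule.span R (Set.range fun p : G × V => indRep J σ p.1 (indIncl J σ p.2)) = ⊤ := by
  refine Submodule.eq_top_iff'.mpr fun f => ?_
  rw [← sum_indRep_out_indIncl J σ f]
  exact Submodule.sum_mem _ fun c _ => Submodule.subset_span ⟨(c.out, _), rfl⟩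

lemma eq_top_of_indIncl_mem (N : Submodule R (indCarrier J σ))
    (hN : ∀ (x : G) (f : indCarrier J σ), f ∈ N → indRep J σ x f ∈ N)
    (h : ∀ v, indIncl J σ v ∈ N) : N = ⊤ := by
  rw [eq_top_iff, ← span_range_indRep_indIncl, Submodule.span_le]
  rintro _ ⟨⟨g, v⟩, rfl⟩
  exact hN g _ (h v)

lemma apply_eq_apply_indIncl_one {W : Type*} [AddCommGroup W] [Module R W]
    (Φ : indCarrier J σ →ₗ[R] W)
    (h0 : ∀ g : G, g ∉ J → ∀ v, Φ (indRep J σ g (indIncl J σ v)) = 0) (f : indCarrier J σ) :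
    Φ f = Φ (indIncl J σ ((f : G → V) 1)) := by
  let evalOne : indCarrier J σ →ₗ[R] V := (LinearMap.proj 1).comp (indCarrier J σ).subtype
  suffices Φ = Φ ∘ₗ indIncl J σ ∘ₗ evalOne from congr($this f)
  refine LinearMap.ext_on_range (span_range_indRep_indIncl J σ) fun ⟨g, v⟩ => ?_
  by_cases hg : g ∈ J
  · have h : indRep J σ g (indIncl J σ v) = indIncl J σ (σ ⟨g, hg⟩ v) :=
      indRep_indIncl J σ ⟨g, hg⟩ v
    simp [evalOne, h, indIncl_apply_one]
  · have hg' : g⁻¹ ∉ J := fun h => hg (by simpa using J.inv_mem h)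
    simp [evalOne, h0 g hg, indRep_apply, indIncl_apply, hg']

lemma apply_indRep_indIncl_eq_zero
    (ha' : ∀ g : G, g ∉ J → ∀ f : V →ₗ[R] V,
      (∀ (x : G) (hx : x ∈ J) (hx' : g⁻¹ * x * g ∈ J) (v : V),
        f (σ ⟨g⁻¹ * x * g, hx'⟩ v) = σ ⟨x, hx⟩ (f v)) → f = 0)
    (Φ : indCarrier J σ →ₗ[R] V) (hΦ : ∀ (j : J) f, Φ (indRep J σ j f) = σ j (Φ f))
    (g : G) (hg : g ∉ J) (v : V) : Φ (indRep J σ g (indIncl J σ v)) = 0 := by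
  refine congr($(ha' g hg (Φ ∘ₗ indRep J σ g ∘ₗ indIncl J σ) fun x hx hx' w => ?_) v)
  have hconj : g * (g⁻¹ * x * g) = x * g := by group
  simp only [LinearMap.comp_apply, ← indRep_indIncl, ← Module.End.mul_apply, ← map_mul, hconj]
  rw [map_mul, Module.End.mul_apply]
  exact hΦ ⟨x, hx⟩ _

lemma eq_bot_of_le_ker {W : Type*} [AddCommGroup W] [Module R W] (Φ : indCarrier J σ →ₗ[R] W)
    (hΦ : ∀ f, Φ f = Φ (indIncl J σ ((f : G → V) 1))) (hinj : Injective (Φ ∘ₗ indIncl J σ))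
    (N : Submodule R (indCarrier J σ))
    (hN : ∀ (x : G) (f : indCarrier J σ), f ∈ N → indRep J σ x f ∈ N)
    (hle : N ≤ LinearMap.ker Φ) : N = ⊥ := by
  refine (Submodule.eq_bot_iff N).mpr fun f hf => ?_
  ext x
  have h := hle (hN x⁻¹ f hf)
  rw [LinearMap.mem_ker, hΦ, indRep_apply, inv_inv, mul_one] at h
  exact hinj (h.trans (map_zero _).symm)

lemma eq_bot_of_le_ker_of_surjective [IsIrreducible σ] [Nontrivial V]
    (Φ : indCarrier J σ →ₗ[R] V) (hΦ : ∀ (j : J) f, Φ (indRep J σ j f) = σ j (Φ f))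
    (h0 : ∀ g : G, g ∉ J → ∀ v, Φ (indRep J σ g (indIncl J σ v)) = 0) (hsurj : Surjective Φ)
    (N : Submodule R (indCarrier J σ))
    (hN : ∀ (x : G) (f : indCarrier J σ), f ∈ N → indRep J σ x f ∈ N)
    (hle : N ≤ LinearMap.ker Φ) : N = ⊥ := by
  have hΦform := apply_eq_apply_indIncl_one J σ Φ h0
  have hinj : Injective (Φ ∘ₗ indIncl J σ) := by
    refine IsIrreducible.injective_of_isIntertwining σ (fun j v =>
      (congrArg Φ (indRep_indIncl J σ j v).symm).trans (hΦ j _)) fun h => ?_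
    obtain ⟨v, hv⟩ := exists_ne (0 : V)
    obtain ⟨f, rfl⟩ := hsurj v
    exact hv ((hΦform f).trans congr($h _))
  exact eq_bot_of_le_ker J σ Φ hΦform hinj N hN hle

end Induced

/-- Criterion for irreducibility of an induced representation (variant):
let `R` be a field, `G` a group, `J` a subgroup of `G` and `λ` a simple `R[J]`-module
(given as a representation `σ` of `J` on `V`).  Assume

(a') the intertwining set of `λ` in `G` is `J`: for every `g ∈ G` with `g ∉ J`, the only
`R[J ∩ gJg⁻¹]`-linear map `ᵍλ → λ|_{J ∩ gJg⁻¹}` (where `x ∈ J ∩ gJg⁻¹` acts on `ᵍλ` by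
`σ (g⁻¹ x g)`) is zero; and

(b') for every `R[G]`-quotient module `π` of `ind_J^G λ`, if `λ` is isomorphic to an
`R[J]`-submodule of `π|_J` then `λ` is isomorphic to a quotient of `π|_J`.

Then `ind_J^G λ` is a simple `R[G]`-module. -/
theorem stmt_1 (J : Subgroup G) (σ : Representation R J V)
    (hsimple : IsSimpleModule (MonoidAlgebra R J) σ.asModule)
    (ha' : ∀ g : G, g ∉ J → ∀ f : V →ₗ[R] V,
      (∀ (x : G) (hx : x ∈ J) (hx' : g⁻¹ * x * g ∈ J) (v : V),
        f (σ ⟨g⁻¹ * x * g, hx'⟩ v) = σ ⟨x, hx⟩ (f v)) → f = 0)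
    (hb' : ∀ (N : Submodule R (indCarrier J σ))
      (hN : ∀ (x : G) (f : indCarrier J σ), f ∈ N → indRep J σ x f ∈ N),
      (∃ ψ : V →ₗ[R] (indCarrier J σ ⧸ N), Function.Injective ψ ∧
        ∀ (j : J) (v : V),
          ψ (σ j v) = quotRep (indRep J σ) N hN (j : G) (ψ v)) →
      (∃ φ : (indCarrier J σ ⧸ N) →ₗ[R] V, Function.Surjective φ ∧
        ∀ (j : J) (y : indCarrier J σ ⧸ N),
          φ (quotRep (indRep J σ) N hN (j : G) y) = σ j (φ y))) :
    IsSimpleModule (MonoidAlgebra R G) (indRep J σ).asModule := by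
  have : IsIrreducible σ := (irreducible_iff_isSimpleModule_asModule σ).mpr hsimple
  have : Nontrivial V := IsSimpleModule.nontrivial (MonoidAlgebra R J) σ.asModule
  have : Nontrivial (indCarrier J σ) := (indIncl_injective J σ).nontrivial
  refine (irreducible_iff_isSimpleModule_asModule (indRep J σ)).mp <|
    isIrreducible_of_forall_invariant fun N hN hNtop => ?_
  obtain ⟨w, hw⟩ : ∃ w, indIncl J σ w ∉ N :=
    not_forall.mp (mt (eq_top_of_indIncl_mem J σ N hN) hNtop)
  let ψ := N.mkQ ∘ₗ indIncl J σ
  have hψ (j : J) (v : V) : ψ (σ j v) = quotRep (indRep J σ) N hN j (ψ v) :=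
    congrArg N.mkQ (indRep_indIncl J σ j v).symm
  have hψinj : Injective ψ :=
    IsIrreducible.injective_of_isIntertwining ((quotRep (indRep J σ) N hN).comp J.subtype) hψ
      fun h => hw ((Submodule.Quotient.mk_eq_zero N).mp congr($h w))
  obtain ⟨φ, hφsurj, hφ⟩ := hb' N hN ⟨ψ, hψinj, hψ⟩
  let Φ := φ ∘ₗ N.mkQ
  have hΦ (j : J) (f : indCarrier J σ) : Φ (indRep J σ j f) = σ j (Φ f) := hφ j (N.mkQ f)
  exact eq_bot_of_le_ker_of_surjective J σ Φ hΦ (apply_indRep_indIncl_eq_zero J σ ha' Φ hΦ)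
    (hφsurj.comp N.mkQ_surjective) N hN
    ((Submodule.ker_mkQ N).ge.trans (LinearMap.ker_le_ker_comp _ _))
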